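/- arXiv:1504.06125 — 4 statements merged into one kernel-verified Lean document; each statement's English description precedes it below -/
import Mathlib

section
/- Let q > 0, let ε be a nonzero real number, and let m, n ∈ ℕ. Let u, v : (0,∞) × ℝ × ℝ → ℂ be functions of (x, t, s), differentiable in both time variables t and s. For each fixed (t,s) define the coefficient functions a_{r;k}(x) (r ≥ 1, k ∈ ℤ) of the powers L^r of the Lax operator L = Λ_q + u + vΛ_q^{-1} recursively by: a_{1;1} = 1, a_{1;0} = u, a_{1;−1} = v, a_{1;k} = 0 for |k| > 1, and a_{r;k}(x) = a_{r−1;k−1}(qx) + u(x)a_{r−1;k}(x) + v(x)a_{r−1;k+1}(x/q). Suppose that u, v satisfy the t_m-flow of the q-Toda hierarchy in the variable t and the t_n-flow in the variable s, i.e. for all x, t, s: ε∂_t u(x) = (a_{m+1;1}(x)v(qx) − v(x)a_{m+1;1}(x/q))/(m+1)!, ε∂_t v(x) = v(x)(a_{m+1;0}(x) − a_{m+1;0}(x/q))/(m+1)!, and ε∂_s u(x) = (a_{n+1;1}(x)v(qx) − v(x)a_{n+1;1}(x/q))/(n+1)!, ε∂_s v(x) = v(x)(a_{n+1;0}(x)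 − a_{n+1;0}(x/q))/(n+1)!. Then the Hamiltonian densities h_r := a_{r+1;0}/(r+1)! satisfy the tau-symmetry property: ∂_s h_m(x,t,s) = ∂_t h_n(x,t,s) for all x > 0 and all t, s (i.e. ∂h_m/∂t_n = ∂h_n/∂t_m). -/
namespace QToda

abbrev X := {x : ℝ // 0 < x}
abbrev V := X → ℤ → ℂ

variable (q : ℝ) (hq : 0 < q)

noncomputable def S (j : ℤ) (x : X) : X := ⟨q ^ j * x.1, mul_pos (zpow_pos hq j) x.2⟩

lemma S_S (i j : ℤ) (x : X) : S q hq i (S q hq j x) = S q hq (i + j) x := by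
  apply Subtype.ext
  simp only [S, ← mul_assoc, ← zpow_add₀ hq.ne']

lemma S_zero (x : X) : S q hq 0 x = x := Subtype.ext (by simp [S])

lemma S_one (x : X) : S q hq 1 x = ⟨q * x.1, mul_pos hq x.2⟩ := Subtype.ext (by simp [S])

lemma S_neg_one (x : X) : S q hq (-1) x = ⟨x.1 / q, div_pos x.2 hq⟩ := by
  apply Subtype.ext
  simp [S, zpow_neg, zpow_one]
  ring

def delta (f : X → ℂ) (j : ℤ) : V := fun x d => if d = j then f x else 0

noncomputable def MLam (g : X → ℂ) (e : ℤ) : Module.End ℂ V where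
  toFun φ := fun x d => g x * φ (S q hq e x) (d - e)
  map_add' φ ψ := by funext x d; simp [Pi.add_apply]; ring
  map_smul' c φ := by funext x d; simp [Pi.smul_apply, smul_eq_mul]; ring

noncomputable def Lop (u v : X → ℂ) : Module.End ℂ V where
  toFun φ := fun x d =>
    φ (S q hq 1 x) (d - 1) + u x * φ x d + v x * φ (S q hq (-1) x) (d + 1)
  map_add' φ ψ := by funext x d; simp [Pi.add_apply]; ring
  map_smul' c φ := by funext x d; simp [Pi.smul_apply, smul_eq_mul]; ring

def IsSymb (T : Module.End ℂ V) (c : ℤ → X → ℂ) : Prop :=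
  ∀ (f : X → ℂ) (j : ℤ) (x : X) (d : ℤ),
    T (delta f j) x d = c (d - j) x * f (S q hq (d - j) x)

lemma isSymb_congr {T : Module.End ℂ V} {c c' : ℤ → X → ℂ}
    (h : IsSymb q hq T c) (h2 : ∀ k x, c k x = c' k x) : IsSymb q hq T c' := by
  intro f j x d; rw [h f j x d, h2]

lemma isSymb_unique {T : Module.End ℂ V} {c c' : ℤ → X → ℂ}
    (h : IsSymb q hq T c) (h' : IsSymb q hq T c') : ∀ k x, c k x = c' k x := by
  intro k x
  have h1 := h (fun _ => 1) 0 x k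
  have h2 := h' (fun _ => 1) 0 x k
  simp only [mul_one, sub_zero] at h1 h2
  rw [← h1, h2]

lemma isSymb_sub {T T' : Module.End ℂ V} {c c' : ℤ → X → ℂ}
    (h : IsSymb q hq T c) (h' : IsSymb q hq T' c') :
    IsSymb q hq (T - T') (fun k x => c k x - c' k x) := by
  intro f j x d
  have : (T - T') (delta f j) x d = T (delta f j) x d - T' (delta f j) x d := by
    simp [LinearMap.sub_apply, Pi.sub_apply]
  rw [this, h f j x d, h' f j x d]; ring

lemma isSymb_add {T T' : Module.End ℂ V} {c c' : ℤ → X → ℂ}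
    (h : IsSymb q hq T c) (h' : IsSymb q hq T' c') :
    IsSymb q hq (T + T') (fun k x => c k x + c' k x) := by
  intro f j x d
  have : (T + T') (delta f j) x d = T (delta f j) x d + T' (delta f j) x d := by
    simp [LinearMap.add_apply, Pi.add_apply]
  rw [this, h f j x d, h' f j x d]; ring

lemma isSymb_L_comp {u v : X → ℂ} {T : Module.End ℂ V} {c : ℤ → X → ℂ}
    (h : IsSymb q hq T c) :
    IsSymb q hq (Lop q hq u v * T)
      (fun k x => c (k - 1) (S q hq 1 x) + u x * c k x
        + v x * c (k + 1) (S q hq (-1) x)) := by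
  intro f j x d
  have e1 : (Lop q hq u v * T) (delta f j) x d
      = T (delta f j) (S q hq 1 x) (d - 1) + u x * T (delta f j) x d
        + v x * T (delta f j) (S q hq (-1) x) (d + 1) := rfl
  rw [e1, h f j, h f j, h f j]
  rw [S_S, S_S]
  have e2 : d - 1 - j = d - j - 1 := by ring
  have e3 : d + 1 - j = d - j + 1 := by ring
  have e4 : d - j - 1 + 1 = d - j := by ring
  have e5 : d - j + 1 + -1 = d - j := by ring
  rw [e2, e3, e4, e5]
  ring


lemma sum_support (s t : Finset ℤ) (f : ℤ → ℂ)
    (h1 : ∀ i ∈ s, i ∉ t → f i = 0) (h2 : ∀ i ∈ t, i ∉ s → f i = 0) :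
    ∑ i ∈ s, f i = ∑ i ∈ t, f i := by
  have e1 : ∑ i ∈ s ∩ t, f i = ∑ i ∈ s, f i := by
    refine Finset.sum_subset Finset.inter_subset_left ?_
    intro i his hnot
    exact h1 i his (fun hit => hnot (Finset.mem_inter.mpr ⟨his, hit⟩))
  have e2 : ∑ i ∈ s ∩ t, f i = ∑ i ∈ t, f i := by
    refine Finset.sum_subset Finset.inter_subset_right ?_
    intro i hit hnot
    exact h2 i hit (fun his => hnot (Finset.mem_inter.mpr ⟨his, hit⟩))
  rw [← e1, e2]

lemma isSymb_comp {T T' : Module.End ℂ V} {c c' : ℤ → X → ℂ} (N : ℕ)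
    (h : IsSymb q hq T c) (h' : IsSymb q hq T' c')
    (hsupp : ∀ i : ℤ, ((N : ℤ) < i ∨ i < -(N : ℤ)) → ∀ x, c' i x = 0) :
    IsSymb q hq (T * T')
      (fun k x => ∑ i ∈ Finset.Icc (-(N : ℤ)) N, c (k - i) x * c' i (S q hq (k - i) x)) := by
  intro f j x d
  have hdec : T' (delta f j)
      = ∑ i ∈ Finset.Icc (-(N : ℤ)) N,
          delta (fun y => c' i y * f (S q hq i y)) (j + i) := by
    funext y d'
    rw [Finset.sum_apply, Finset.sum_apply]
    have hterm : ∀ i ∈ Finset.Icc (-(N : ℤ)) N,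
        delta (fun y => c' i y * f (S q hq i y)) (j + i) y d'
          = if i = d' - j then c' i y * f (S q hq i y) else 0 := by
      intro i _
      unfold delta
      refine if_congr ?_ rfl rfl
      omega
    rw [Finset.sum_congr rfl hterm, Finset.sum_ite_eq' (Finset.Icc (-(N : ℤ)) N)]
    rw [h' f j y d']
    by_cases hm : d' - j ∈ Finset.Icc (-(N : ℤ)) N
    · rw [if_pos hm]
    · rw [if_neg hm]
      have : c' (d' - j) y = 0 := by
        apply hsupp
        · simp only [Finset.mem_Icc] at hm
          omega
      rw [this, zero_mul]
  rw [Module.End.mul_apply, hdec, map_sum, Finset.sum_apply, Finset.sum_apply]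
  have hterm2 : ∀ i ∈ Finset.Icc (-(N : ℤ)) N,
      T (delta (fun y => c' i y * f (S q hq i y)) (j + i)) x d
        = c (d - j - i) x * c' i (S q hq (d - j - i) x) * f (S q hq (d - j) x) := by
    intro i _
    rw [h _ (j + i) x d]
    have e1 : d - (j + i) = d - j - i := by ring
    rw [e1, S_S]
    have e2 : i + (d - j - i) = d - j := by ring
    rw [e2]
    ring
  rw [Finset.sum_congr rfl hterm2, ← Finset.sum_mul]

noncomputable def Bop (A : ℤ → X → ℂ) (m : ℕ) : Module.End ℂ V :=
  ∑ j ∈ Finset.Icc (0 : ℤ) (m + 1), MLam q hq (A j) j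

lemma isSymb_B (A : ℤ → X → ℂ) (m : ℕ) (hA : ∀ k : ℤ, (m + 1 : ℤ) < k → ∀ x, A k x = 0) :
    IsSymb q hq (Bop q hq A m) (fun k x => if 0 ≤ k then A k x else 0) := by
  intro f j x d
  beta_reduce
  rw [Bop, LinearMap.sum_apply, Finset.sum_apply, Finset.sum_apply]
  have hterm : ∀ e ∈ Finset.Icc (0 : ℤ) (m + 1 : ℤ),
      MLam q hq (A e) e (delta f j) x d
        = if e = d - j then A e x * f (S q hq e x) else 0 := by
    intro e _
    show A e x * delta f j (S q hq e x) (d - e) = _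
    unfold delta
    by_cases he : e = d - j
    · rw [if_pos he, if_pos (by omega)]
    · rw [if_neg he, if_neg (by omega), mul_zero]
  rw [Finset.sum_congr rfl hterm, Finset.sum_ite_eq' (Finset.Icc (0 : ℤ) (m + 1 : ℤ))]
  by_cases hm : d - j ∈ Finset.Icc (0 : ℤ) (m + 1 : ℤ)
  · rw [if_pos hm, if_pos (Finset.mem_Icc.mp hm).1]
  · rw [if_neg hm]
    simp only [Finset.mem_Icc, not_and_or, not_le] at hm
    rcases hm with hm | hm
    · rw [if_neg (by omega), zero_mul]
    · by_cases h0 : 0 ≤ d - j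
      · rw [if_pos h0, hA _ (by omega), zero_mul]
      · rw [if_neg h0, zero_mul]


lemma comm_step (B L C : Module.End ℂ V) :
    B * (L * C) - L * C * B = (B * L - L * B) * C + L * (B * C - C * B) := by
  rw [sub_mul, mul_sub, mul_assoc B L C, mul_assoc L B C, mul_assoc L C B]
  abel

lemma sum_Icc_eval3 (N : ℤ) (f : ℤ → ℂ) (e : ℤ)
    (hf : ∀ i, i ≠ e - 1 → i ≠ e → i ≠ e + 1 → f i = 0)
    (hout : ∀ i, (N < i ∨ i < -N) → f i = 0) :
    ∑ i ∈ Finset.Icc (-N) N, f i = f (e - 1) + f e + f (e + 1) := by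
  rw [sum_support (Finset.Icc (-N) N) ({e - 1, e, e + 1} : Finset ℤ) f ?_ ?_]
  · rw [Finset.sum_insert (by simp only [Finset.mem_insert, Finset.mem_singleton, not_or]; omega),
      Finset.sum_insert (by simp only [Finset.mem_singleton]; omega), Finset.sum_singleton]
    ring
  · intro i _ hnot
    simp only [Finset.mem_insert, Finset.mem_singleton, not_or] at hnot
    exact hf i hnot.1 hnot.2.1 hnot.2.2
  · intro i _ hnot
    apply hout
    simp only [Finset.mem_Icc, not_and_or, not_le] at hnot
    omega

lemma sum_Icc_eval2 (N : ℤ) (f : ℤ → ℂ) (e : ℤ)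
    (hf : ∀ i, i ≠ e → i ≠ e + 1 → f i = 0)
    (hout : ∀ i, (N < i ∨ i < -N) → f i = 0) :
    ∑ i ∈ Finset.Icc (-N) N, f i = f e + f (e + 1) := by
  rw [sum_support (Finset.Icc (-N) N) ({e, e + 1} : Finset ℤ) f ?_ ?_]
  · rw [Finset.sum_insert (by simp only [Finset.mem_singleton]; omega), Finset.sum_singleton]
  · intro i _ hnot
    simp only [Finset.mem_insert, Finset.mem_singleton, not_or] at hnot
    exact hf i hnot.1 hnot.2
  · intro i _ hnot
    apply hout
    simp only [Finset.mem_Icc, not_and_or, not_le] at hnot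
    omega

section Algebra

variable (Uf Vf : X → ℂ) (A : ℕ → ℤ → X → ℂ)

variable (h11 : ∀ x, A 1 1 x = 1) (h10 : ∀ x, A 1 0 x = Uf x)
  (h1m1 : ∀ x, A 1 (-1) x = Vf x)
  (h1k : ∀ k : ℤ, (1 < k ∨ k < -1) → ∀ x, A 1 k x = 0)
  (hrec : ∀ r : ℕ, 1 ≤ r → ∀ (k : ℤ) (x : X),
    A (r + 1) k x = A r (k - 1) (S q hq 1 x) + Uf x * A r k x
      + Vf x * A r (k + 1) (S q hq (-1) x))

include h1k in
include hrec in
lemma Asupp : ∀ r : ℕ, 1 ≤ r → ∀ k : ℤ, ((r : ℤ) < k ∨ k < -(r : ℤ)) → ∀ x, A r k x = 0 := by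
  intro r
  induction r with
  | zero => omega
  | succ r ih =>
    intro _ k hk x
    rcases Nat.eq_or_lt_of_le (Nat.one_le_iff_ne_zero.mpr (by omega) : 1 ≤ r + 1) with h1 | h1
    · have hr0 : r = 0 := by omega
      subst hr0
      exact h1k k (by push_cast at hk ⊢; omega) x
    · have hr1 : 1 ≤ r := by omega
      rw [hrec r hr1 k x, ih hr1 (k - 1) (by push_cast at hk ⊢; omega),
        ih hr1 k (by push_cast at hk ⊢; omega), ih hr1 (k + 1) (by push_cast at hk ⊢; omega)]
      ring

include h11 in
include h10 in
include h1m1 in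
include h1k in
lemma isSymb_L : IsSymb q hq (Lop q hq Uf Vf) (A 1) := by
  intro f j x d
  have hL : Lop q hq Uf Vf (delta f j) x d
      = (if d - 1 = j then f (S q hq 1 x) else 0) + Uf x * (if d = j then f x else 0)
        + Vf x * (if d + 1 = j then f (S q hq (-1) x) else 0) := rfl
  rw [hL]
  rcases (by omega : d - j = 1 ∨ d - j = 0 ∨ d - j = -1 ∨ (1 < d - j ∨ d - j < -1)) with
    hc | hc | hc | hc
  · rw [if_pos (by omega : d - 1 = j), if_neg (by omega : ¬d = j),
      if_neg (by omega : ¬d + 1 = j), hc, h11]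
    ring
  · rw [if_neg (by omega : ¬d - 1 = j), if_pos (by omega : d = j),
      if_neg (by omega : ¬d + 1 = j), hc, h10, S_zero]
    ring
  · rw [if_neg (by omega : ¬d - 1 = j), if_neg (by omega : ¬d = j),
      if_pos (by omega : d + 1 = j), hc, h1m1]
    ring
  · rw [if_neg (by omega : ¬d - 1 = j), if_neg (by omega : ¬d = j),
      if_neg (by omega : ¬d + 1 = j), h1k (d - j) hc]
    ring

include h11 h10 h1m1 h1k hrec in
lemma isSymb_pow : ∀ r : ℕ, 1 ≤ r → IsSymb q hq (Lop q hq Uf Vf ^ r) (A r) := by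
  intro r
  induction r with
  | zero => omega
  | succ r ih =>
    intro _
    rcases Nat.eq_zero_or_pos r with h1 | h1
    · subst h1
      rw [pow_one]
      exact isSymb_L q hq Uf Vf A h11 h10 h1m1 h1k
    · rw [pow_succ']
      refine isSymb_congr q hq (isSymb_L_comp q hq (ih h1)) ?_
      intro k x
      exact (hrec r h1 k x).symm

include h11 h10 h1m1 h1k hrec in
lemma rrec : ∀ r : ℕ, 1 ≤ r → ∀ (k : ℤ) (x : X),
    A (r + 1) k x = A r (k - 1) x + A r k x * Uf (S q hq k x)
      + A r (k + 1) x * Vf (S q hq (k + 1) x) := by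
  intro r hr k x
  have hS := isSymb_comp q hq 1
    (isSymb_pow q hq Uf Vf A h11 h10 h1m1 h1k hrec r hr)
    (isSymb_L q hq Uf Vf A h11 h10 h1m1 h1k)
    (fun i hi x' => h1k i (by omega) x')
  rw [← pow_succ] at hS
  have hU := isSymb_unique q hq
    (isSymb_pow q hq Uf Vf A h11 h10 h1m1 h1k hrec (r + 1) (by omega)) hS k x
  rw [Nat.cast_one] at hU
  rw [hU]
  beta_reduce
  rw [sum_Icc_eval3 1 _ 0 ?_ ?_]
  · norm_num
    rw [h1m1, h10, h11]
    ring
  · intro i hi1 hi2 hi3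
    rw [h1k i (by omega), mul_zero]
  · intro i hi
    rw [h1k i (by omega), mul_zero]


noncomputable def bf (m : ℕ) : ℤ → X → ℂ := fun k x => if 0 ≤ k then A (m + 1) k x else 0

noncomputable def Psi (m r : ℕ) (k : ℤ) (x : X) : ℂ :=
  (∑ i ∈ Finset.Icc (-(r : ℤ)) (r : ℤ), bf A m (k - i) x * A r i (S q hq (k - i) x))
    - ∑ i ∈ Finset.Icc (-((m + 1 : ℕ) : ℤ)) ((m + 1 : ℕ) : ℤ),
        A r (k - i) x * bf A m i (S q hq (k - i) x)

include h1k hrec in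
lemma bf_supp (m : ℕ) : ∀ i : ℤ, (((m + 1 : ℕ) : ℤ) < i ∨ i < -((m + 1 : ℕ) : ℤ)) →
    ∀ x, bf A m i x = 0 := by
  intro i hi x
  unfold bf
  by_cases h0 : 0 ≤ i
  · rw [if_pos h0]
    exact Asupp q hq Uf Vf A h1k hrec (m + 1) (by omega) i (by push_cast at hi ⊢; omega) x
  · rw [if_neg h0]

include h1k hrec in
lemma isSymb_Bf (m : ℕ) : IsSymb q hq (Bop q hq (A (m + 1)) m) (bf A m) := by
  refine isSymb_congr q hq (isSymb_B q hq (A (m + 1)) m ?_) ?_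
  · intro k hk x
    exact Asupp q hq Uf Vf A h1k hrec (m + 1) (by omega) k (by push_cast; omega) x
  · intro k x
    rfl

include h11 h10 h1m1 h1k hrec in
lemma isSymb_Psi (m r : ℕ) (hr : 1 ≤ r) :
    IsSymb q hq
      (Bop q hq (A (m + 1)) m * Lop q hq Uf Vf ^ r
        - Lop q hq Uf Vf ^ r * Bop q hq (A (m + 1)) m)
      (Psi q hq A m r) := by
  have c1 := isSymb_comp q hq r (isSymb_Bf q hq Uf Vf A h1k hrec m)
    (isSymb_pow q hq Uf Vf A h11 h10 h1m1 h1k hrec r hr)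
    (fun i hi x => Asupp q hq Uf Vf A h1k hrec r hr i hi x)
  have c2 := isSymb_comp q hq (m + 1)
    (isSymb_pow q hq Uf Vf A h11 h10 h1m1 h1k hrec r hr)
    (isSymb_Bf q hq Uf Vf A h1k hrec m)
    (fun i hi x => bf_supp q hq Uf Vf A h1k hrec m i hi x)
  exact isSymb_congr q hq (isSymb_sub q hq c1 c2) (fun k x => rfl)

include h11 h10 h1m1 h1k hrec in
lemma Psi1_eval (m : ℕ) (k : ℤ) (x : X) :
    Psi q hq A m 1 k x
      = bf A m (k + 1) x * Vf (S q hq (k + 1) x) + bf A m k x * Uf (S q hq k x)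
          + bf A m (k - 1) x
        - (bf A m (k - 1) (S q hq 1 x) + Uf x * bf A m k x
            + Vf x * bf A m (k + 1) (S q hq (-1) x)) := by
  unfold Psi
  rw [Nat.cast_one]
  rw [sum_Icc_eval3 1 _ 0 ?_ ?_]
  · rw [sum_Icc_eval3 ((m + 1 : ℕ) : ℤ) _ k ?_ ?_]
    · have e0 : (0 : ℤ) - 1 = -1 := by ring
      have e0' : (0 : ℤ) + 1 = 1 := by ring
      have e1 : k - (k - 1) = 1 := by ring
      have e2 : k - k = 0 := by ring
      have e3 : k - (k + 1) = -1 := by ring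
      rw [e0, e0', e1, e2, e3]
      have e4 : k - -1 = k + 1 := by ring
      have e5 : k - 0 = k := by ring
      rw [e4, e5]
      simp only [h11, h10, h1m1, S_zero]
      ring
    · intro i hi1 hi2 hi3
      rw [h1k (k - i) (by omega), zero_mul]
    · intro i hi
      rw [bf_supp q hq Uf Vf A h1k hrec m i (by omega), mul_zero]
  · intro i hi1 hi2 hi3
    rw [h1k i (by omega), mul_zero]
  · intro i hi
    rw [h1k i (by omega), mul_zero]

include h11 h10 h1m1 h1k hrec in
lemma Psi1_vanish (m : ℕ) (k : ℤ) (hk : k ≠ 0) (hk' : k ≠ -1) (x : X) :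
    Psi q hq A m 1 k x = 0 := by
  rw [Psi1_eval q hq Uf Vf A h11 h10 h1m1 h1k hrec m k x]
  rcases (by omega : 1 ≤ k ∨ k < -1) with hc | hc
  · have b1 : bf A m (k + 1) x = A (m + 1) (k + 1) x := if_pos (by omega)
    have b2 : bf A m k x = A (m + 1) k x := if_pos (by omega)
    have b3 : bf A m (k - 1) x = A (m + 1) (k - 1) x := if_pos (by omega)
    have b4 : bf A m (k - 1) (S q hq 1 x) = A (m + 1) (k - 1) (S q hq 1 x) := if_pos (by omega)
    have b5 : bf A m (k + 1) (S q hq (-1) x) = A (m + 1) (k + 1) (S q hq (-1) x) :=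
      if_pos (by omega)
    rw [b1, b2, b3, b4, b5]
    linear_combination
      (hrec (m + 1) (by omega) k x)
        - (rrec q hq Uf Vf A h11 h10 h1m1 h1k hrec (m + 1) (by omega) k x)
  · have b1 : bf A m (k + 1) x = 0 := if_neg (by omega)
    have b2 : bf A m k x = 0 := if_neg (by omega)
    have b3 : bf A m (k - 1) x = 0 := if_neg (by omega)
    have b4 : bf A m (k - 1) (S q hq 1 x) = 0 := if_neg (by omega)
    have b5 : bf A m (k + 1) (S q hq (-1) x) = 0 := if_neg (by omega)
    rw [b1, b2, b3, b4, b5]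
    ring

include h11 h10 h1m1 h1k hrec in
lemma Psi1_zero (m : ℕ) (x : X) :
    Psi q hq A m 1 0 x
      = A (m + 1) 1 x * Vf (S q hq 1 x) - Vf x * A (m + 1) 1 (S q hq (-1) x) := by
  rw [Psi1_eval q hq Uf Vf A h11 h10 h1m1 h1k hrec m 0 x]
  have b1 : bf A m (0 + 1) x = A (m + 1) 1 x := if_pos (by omega)
  have b2 : bf A m 0 x = A (m + 1) 0 x := if_pos (by omega)
  have b3 : bf A m (0 - 1) x = 0 := if_neg (by omega)
  have b4 : bf A m (0 - 1) (S q hq 1 x) = 0 := if_neg (by omega)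
  have b5 : bf A m (0 + 1) (S q hq (-1) x) = A (m + 1) 1 (S q hq (-1) x) := if_pos (by omega)
  rw [b1, b2, b3, b4, b5, S_zero]
  ring

include h11 h10 h1m1 h1k hrec in
lemma Psi1_negone (m : ℕ) (x : X) :
    Psi q hq A m 1 (-1) x
      = Vf x * (A (m + 1) 0 x - A (m + 1) 0 (S q hq (-1) x)) := by
  rw [Psi1_eval q hq Uf Vf A h11 h10 h1m1 h1k hrec m (-1) x]
  have b1 : bf A m (-1 + 1) x = A (m + 1) 0 x := if_pos (by omega)
  have b2 : bf A m (-1 : ℤ) x = 0 := if_neg (by omega)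
  have b3 : bf A m (-1 - 1) x = 0 := if_neg (by omega)
  have b4 : bf A m (-1 - 1) (S q hq 1 x) = 0 := if_neg (by omega)
  have b5 : bf A m (-1 + 1) (S q hq (-1) x) = A (m + 1) 0 (S q hq (-1) x) := if_pos (by omega)
  rw [b1, b2, b3, b4, b5]
  have : (-1 : ℤ) + 1 = 0 := by ring
  rw [this, S_zero]
  ring

include h11 h10 h1m1 h1k hrec in
lemma PsiStep (m r : ℕ) (hr : 1 ≤ r) (k : ℤ) (x : X) :
    Psi q hq A m (r + 1) k x
      = Psi q hq A m r (k - 1) (S q hq 1 x) + Uf x * Psi q hq A m r k x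
        + Vf x * Psi q hq A m r (k + 1) (S q hq (-1) x)
        + Psi q hq A m 1 0 x * A r k x
        + Psi q hq A m 1 (-1) x * A r (k + 1) (S q hq (-1) x) := by
  have hfull := isSymb_Psi q hq Uf Vf A h11 h10 h1m1 h1k hrec m (r + 1) (by omega)
  have h1S := isSymb_Psi q hq Uf Vf A h11 h10 h1m1 h1k hrec m 1 (by omega)
  have hrS := isSymb_Psi q hq Uf Vf A h11 h10 h1m1 h1k hrec m r hr
  have hT2 := isSymb_comp q hq r h1S
    (isSymb_pow q hq Uf Vf A h11 h10 h1m1 h1k hrec r hr)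
    (fun i hi x => Asupp q hq Uf Vf A h1k hrec r hr i hi x)
  have hT3 := isSymb_L_comp q hq (u := Uf) (v := Vf) hrS
  have hRHS := isSymb_add q hq hT2 hT3
  have hEq : Bop q hq (A (m + 1)) m * Lop q hq Uf Vf ^ (r + 1)
      - Lop q hq Uf Vf ^ (r + 1) * Bop q hq (A (m + 1)) m
      = (Bop q hq (A (m + 1)) m * Lop q hq Uf Vf ^ 1
          - Lop q hq Uf Vf ^ 1 * Bop q hq (A (m + 1)) m) * Lop q hq Uf Vf ^ r
        + Lop q hq Uf Vf
          * (Bop q hq (A (m + 1)) m * Lop q hq Uf Vf ^ r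
              - Lop q hq Uf Vf ^ r * Bop q hq (A (m + 1)) m) := by
    rw [pow_succ', pow_one]
    exact comm_step _ _ _
  rw [hEq] at hfull
  have hU := isSymb_unique q hq hfull hRHS k x
  rw [hU]
  beta_reduce
  rw [sum_Icc_eval2 (r : ℤ) _ k ?_ ?_]
  · have e1 : k - k = 0 := by ring
    have e2 : k - (k + 1) = -1 := by ring
    rw [e1, e2, S_zero]
    ring
  · intro i hi1 hi2
    rw [Psi1_vanish q hq Uf Vf A h11 h10 h1m1 h1k hrec m (k - i) (by omega) (by omega),
      zero_mul]
  · intro i hi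
    rw [Asupp q hq Uf Vf A h1k hrec r hr i hi, mul_zero]

include h11 h10 h1m1 h1k hrec in
lemma Aprod (r p : ℕ) (hr : 1 ≤ r) (hp : 1 ≤ p) (k : ℤ) (x : X) :
    A (r + p) k x
      = ∑ i ∈ Finset.Icc (-(p : ℤ)) (p : ℤ), A r (k - i) x * A p i (S q hq (k - i) x) := by
  have hS := isSymb_comp q hq p
    (isSymb_pow q hq Uf Vf A h11 h10 h1m1 h1k hrec r hr)
    (isSymb_pow q hq Uf Vf A h11 h10 h1m1 h1k hrec p hp)
    (fun i hi x => Asupp q hq Uf Vf A h1k hrec p hp i hi x)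
  rw [← pow_add] at hS
  exact isSymb_unique q hq
    (isSymb_pow q hq Uf Vf A h11 h10 h1m1 h1k hrec (r + p) (by omega)) hS k x


include h11 h10 h1m1 h1k hrec in
lemma PsiSym (m n : ℕ) (x : X) :
    Psi q hq A n (m + 1) 0 x = Psi q hq A m (n + 1) 0 x := by
  have hKfact : ∀ (N : ℤ) (f : ℤ → ℂ), (∀ i, (N < i ∨ i < -N) → f i = 0) →
      N ≤ (m : ℤ) + n + 2 →
      ∑ i ∈ Finset.Icc (-N) N, f i
        = ∑ i ∈ Finset.Icc (-((m : ℤ) + n + 2)) ((m : ℤ) + n + 2), f i := by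
    intro N f hf hNK
    apply sum_support
    · intro i hi hnot
      exfalso
      apply hnot
      simp only [Finset.mem_Icc] at hi ⊢
      omega
    · intro i _ hnot
      apply hf
      simp only [Finset.mem_Icc, not_and_or, not_le] at hnot
      omega
  unfold Psi
  rw [hKfact ((m + 1 : ℕ) : ℤ) _ ?_ (by push_cast; omega),
    hKfact ((n + 1 : ℕ) : ℤ) _ ?_ (by push_cast; omega),
    hKfact ((n + 1 : ℕ) : ℤ) _ ?_ (by push_cast; omega),
    hKfact ((m + 1 : ℕ) : ℤ) _ ?_ (by push_cast; omega)]
  rotate_left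
  · intro i hi
    rw [bf_supp q hq Uf Vf A h1k hrec m i (by push_cast at hi ⊢; omega) _, mul_zero]
  · intro i hi
    rw [Asupp q hq Uf Vf A h1k hrec (n + 1) (by omega) i (by push_cast at hi ⊢; omega) _,
      mul_zero]
  · intro i hi
    rw [bf_supp q hq Uf Vf A h1k hrec n i (by push_cast at hi ⊢; omega) _, mul_zero]
  · intro i hi
    rw [Asupp q hq Uf Vf A h1k hrec (m + 1) (by omega) i (by push_cast at hi ⊢; omega) _,
      mul_zero]
  rw [← Finset.sum_sub_distrib, ← Finset.sum_sub_distrib, ← sub_eq_zero,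
    ← Finset.sum_sub_distrib]
  have hper : ∀ i ∈ Finset.Icc (-((m : ℤ) + n + 2)) ((m : ℤ) + n + 2),
      bf A n (0 - i) x * A (m + 1) i (S q hq (0 - i) x)
          - A (m + 1) (0 - i) x * bf A n i (S q hq (0 - i) x)
        - (bf A m (0 - i) x * A (n + 1) i (S q hq (0 - i) x)
            - A (n + 1) (0 - i) x * bf A m i (S q hq (0 - i) x))
      = A (n + 1) (0 - i) x * A (m + 1) i (S q hq (0 - i) x)
          - A (m + 1) (0 - i) x * A (n + 1) i (S q hq (0 - i) x) := by
    intro i _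
    unfold bf
    rcases (by omega : i < 0 ∨ i = 0 ∨ 0 < i) with hc | hc | hc
    · rw [if_pos (by omega : (0 : ℤ) ≤ 0 - i), if_neg (by omega : ¬(0 : ℤ) ≤ i),
        if_pos (by omega : (0 : ℤ) ≤ 0 - i), if_neg (by omega : ¬(0 : ℤ) ≤ i)]
      ring
    · subst hc
      norm_num
      rw [S_zero]
      ring
    · rw [if_neg (by omega : ¬(0 : ℤ) ≤ 0 - i), if_pos (by omega : (0 : ℤ) ≤ i),
        if_neg (by omega : ¬(0 : ℤ) ≤ 0 - i), if_pos (by omega : (0 : ℤ) ≤ i)]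
      ring
  rw [Finset.sum_congr rfl hper, Finset.sum_sub_distrib]
  have hp1 : ∑ i ∈ Finset.Icc (-((m : ℤ) + n + 2)) ((m : ℤ) + n + 2),
      A (n + 1) (0 - i) x * A (m + 1) i (S q hq (0 - i) x) = A ((n + 1) + (m + 1)) 0 x := by
    rw [Aprod q hq Uf Vf A h11 h10 h1m1 h1k hrec (n + 1) (m + 1) (by omega) (by omega) 0 x]
    rw [hKfact ((m + 1 : ℕ) : ℤ) _ ?_ (by push_cast; omega)]
    intro i hi
    rw [Asupp q hq Uf Vf A h1k hrec (m + 1) (by omega) i (by push_cast at hi ⊢; omega) _,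
      mul_zero]
  have hp2 : ∑ i ∈ Finset.Icc (-((m : ℤ) + n + 2)) ((m : ℤ) + n + 2),
      A (m + 1) (0 - i) x * A (n + 1) i (S q hq (0 - i) x) = A ((m + 1) + (n + 1)) 0 x := by
    rw [Aprod q hq Uf Vf A h11 h10 h1m1 h1k hrec (m + 1) (n + 1) (by omega) (by omega) 0 x]
    rw [hKfact ((n + 1 : ℕ) : ℤ) _ ?_ (by push_cast; omega)]
    intro i hi
    rw [Asupp q hq Uf Vf A h1k hrec (n + 1) (by omega) i (by push_cast at hi ⊢; omega) _,
      mul_zero]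
  rw [hp1, hp2]
  have hcomm : (n + 1) + (m + 1) = (m + 1) + (n + 1) := by omega
  rw [hcomm, sub_self]

end Algebra

section Flow

variable (ε : ℝ) (m : ℕ) (u v : X → ℝ → ℂ) (a : ℕ → ℤ → X → ℝ → ℂ)

variable
  (hu : ∀ x t, DifferentiableAt ℝ (u x) t)
  (hv : ∀ x t, DifferentiableAt ℝ (v x) t)
  (k11 : ∀ x t, a 1 1 x t = 1)
  (k10 : ∀ x t, a 1 0 x t = u x t)
  (k1m1 : ∀ x t, a 1 (-1) x t = v x t)
  (k1k : ∀ k : ℤ, (1 < k ∨ k < -1) → ∀ x t, a 1 k x t = 0)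
  (krec : ∀ r : ℕ, 1 ≤ r → ∀ (k : ℤ) (x : X) (t : ℝ),
    a (r + 1) k x t = a r (k - 1) (S q hq 1 x) t + u x t * a r k x t
      + v x t * a r (k + 1) (S q hq (-1) x) t)
  (kut : ∀ x t, (ε : ℂ) * deriv (u x) t
    = (a (m + 1) 1 x t * v (S q hq 1 x) t - v x t * a (m + 1) 1 (S q hq (-1) x) t)
      / ((m + 1).factorial : ℂ))
  (kvt : ∀ x t, (ε : ℂ) * deriv (v x) t
    = v x t * (a (m + 1) 0 x t - a (m + 1) 0 (S q hq (-1) x) t) / ((m + 1).factorial : ℂ))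

include hu hv k11 k10 k1m1 k1k krec kut kvt in
lemma flow : ∀ r : ℕ, 1 ≤ r → ∀ (k : ℤ) (x : X) (t : ℝ),
    DifferentiableAt ℝ (fun t' => a r k x t') t ∧
      (ε : ℂ) * deriv (fun t' => a r k x t') t
        = Psi q hq (fun r k x => a r k x t) m r k x / ((m + 1).factorial : ℂ) := by
  intro r
  induction r with
  | zero => omega
  | succ r ih =>
    intro _ k x t
    rcases Nat.eq_zero_or_pos r with hr0 | hr
    · -- base case r + 1 = 1
      subst hr0
      rcases (by omega : k = 1 ∨ k = 0 ∨ k = -1 ∨ (1 < k ∨ k < -1)) with hc | hc | hc | hc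
      · subst hc
        have hfun : (fun t' => a 1 1 x t') = fun _ => (1 : ℂ) := funext fun t' => k11 x t'
        constructor
        · rw [hfun]; exact differentiableAt_const _
        · rw [hfun, deriv_const,
            Psi1_vanish q hq (fun x => u x t) (fun x => v x t) (fun r k x => a r k x t)
              (fun x => k11 x t) (fun x => k10 x t) (fun x => k1m1 x t)
              (fun k hk x => k1k k hk x t) (fun r hr k x => krec r hr k x t)
              m 1 (by omega) (by omega) x]
          simp
      · subst hc
        have hfun : (fun t' => a 1 0 x t') = u x := funext fun t' => k10 x t'
        constructor
        · rw [hfun]; exact hu x t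
        · rw [hfun, kut x t,
            Psi1_zero q hq (fun x => u x t) (fun x => v x t) (fun r k x => a r k x t)
              (fun x => k11 x t) (fun x => k10 x t) (fun x => k1m1 x t)
              (fun k hk x => k1k k hk x t) (fun r hr k x => krec r hr k x t) m x]
      · subst hc
        have hfun : (fun t' => a 1 (-1) x t') = v x := funext fun t' => k1m1 x t'
        constructor
        · rw [hfun]; exact hv x t
        · rw [hfun, kvt x t,
            Psi1_negone q hq (fun x => u x t) (fun x => v x t) (fun r k x => a r k x t)
              (fun x => k11 x t) (fun x => k10 x t) (fun x => k1m1 x t)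
              (fun k hk x => k1k k hk x t) (fun r hr k x => krec r hr k x t) m x]
      · have hfun : (fun t' => a 1 k x t') = fun _ => (0 : ℂ) :=
          funext fun t' => k1k k hc x t'
        constructor
        · rw [hfun]; exact differentiableAt_const _
        · rw [hfun, deriv_const,
            Psi1_vanish q hq (fun x => u x t) (fun x => v x t) (fun r k x => a r k x t)
              (fun x => k11 x t) (fun x => k10 x t) (fun x => k1m1 x t)
              (fun k hk x => k1k k hk x t) (fun r hr k x => krec r hr k x t)
              m k (by omega) (by omega) x]
          simp
    · -- inductive step
      have hfun : (fun t' => a (r + 1) k x t')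
          = fun t' => a r (k - 1) (S q hq 1 x) t' + u x t' * a r k x t'
              + v x t' * a r (k + 1) (S q hq (-1) x) t' :=
        funext fun t' => krec r hr k x t'
      have d1 := ih hr (k - 1) (S q hq 1 x) t
      have d2 := ih hr k x t
      have d3 := ih hr (k + 1) (S q hq (-1) x) t
      constructor
      · rw [hfun]
        exact (d1.1.add ((hu x t).mul d2.1)).add ((hv x t).mul d3.1)
      · rw [hfun, deriv_fun_add
            (f := fun t' => a r (k - 1) (S q hq 1 x) t' + u x t' * a r k x t')
            (g := fun t' => v x t' * a r (k + 1) (S q hq (-1) x) t')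
            (d1.1.add ((hu x t).mul d2.1)) ((hv x t).mul d3.1),
          deriv_fun_add (g := fun t' => u x t' * a r k x t') d1.1 ((hu x t).mul d2.1),
          deriv_fun_mul (hu x t) d2.1,
          deriv_fun_mul (hv x t) d3.1,
          PsiStep q hq (fun x => u x t) (fun x => v x t) (fun r k x => a r k x t)
            (fun x => k11 x t) (fun x => k10 x t) (fun x => k1m1 x t)
            (fun k hk x => k1k k hk x t) (fun r hr k x => krec r hr k x t) m r hr k x,
          Psi1_zero q hq (fun x => u x t) (fun x => v x t) (fun r k x => a r k x t)
            (fun x => k11 x t) (fun x => k10 x t) (fun x => k1m1 x t)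
            (fun k hk x => k1k k hk x t) (fun r hr k x => krec r hr k x t) m x,
          Psi1_negone q hq (fun x => u x t) (fun x => v x t) (fun r k x => a r k x t)
            (fun x => k11 x t) (fun x => k10 x t) (fun x => k1m1 x t)
            (fun k hk x => k1k k hk x t) (fun r hr k x => krec r hr k x t) m x]
        beta_reduce
        linear_combination d1.2 + (a r k x t) * kut x t + (u x t) * d2.2
          + (a r (k + 1) (S q hq (-1) x) t) * kvt x t + (v x t) * d3.2

end Flow

end QToda


/-- tau-symmetry of the q-Toda hierarchy. If u, v evolve in t by the
t_m-flow and in s by the t_n-flow of the q-Toda hierarchy (written in components via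
the coefficients a_{r;k} of L^r), then the Hamiltonian densities h_r = a_{r+1;0}/(r+1)!
satisfy ∂_s h_m = ∂_t h_n. -/
theorem q_toda_tau_symmetry (q : ℝ) (hq : 0 < q) (ε : ℝ) (hε : ε ≠ 0) (m n : ℕ)
    (u v : {x : ℝ // 0 < x} → ℝ → ℝ → ℂ)
    (hu : ∀ (x : {x : ℝ // 0 < x}) (t s : ℝ),
      DifferentiableAt ℝ (fun t' => u x t' s) t ∧ DifferentiableAt ℝ (fun s' => u x t s') s)
    (hv : ∀ (x : {x : ℝ // 0 < x}) (t s : ℝ),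
      DifferentiableAt ℝ (fun t' => v x t' s) t ∧ DifferentiableAt ℝ (fun s' => v x t s') s)
    (a : ℕ → ℤ → {x : ℝ // 0 < x} → ℝ → ℝ → ℂ)
    (ha11 : ∀ x t s, a 1 1 x t s = 1)
    (ha10 : ∀ x t s, a 1 0 x t s = u x t s)
    (ha1m1 : ∀ x t s, a 1 (-1) x t s = v x t s)
    (ha1k : ∀ (k : ℤ), 1 < |k| → ∀ x t s, a 1 k x t s = 0)
    (harec : ∀ (r : ℕ), 1 ≤ r → ∀ (k : ℤ) (x : {x : ℝ // 0 < x}) (t s : ℝ),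
      a (r + 1) k x t s
        = a r (k - 1) ⟨q * x.1, mul_pos hq x.2⟩ t s
          + u x t s * a r k x t s
          + v x t s * a r (k + 1) ⟨x.1 / q, div_pos x.2 hq⟩ t s)
    (hut : ∀ (x : {x : ℝ // 0 < x}) (t s : ℝ),
      (ε : ℂ) * deriv (fun t' => u x t' s) t
        = (a (m + 1) 1 x t s * v ⟨q * x.1, mul_pos hq x.2⟩ t s
            - v x t s * a (m + 1) 1 ⟨x.1 / q, div_pos x.2 hq⟩ t s)
          / ((m + 1).factorial : ℂ))
    (hvt : ∀ (x : {x : ℝ // 0 < x}) (t s : ℝ),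
      (ε : ℂ) * deriv (fun t' => v x t' s) t
        = v x t s * (a (m + 1) 0 x t s - a (m + 1) 0 ⟨x.1 / q, div_pos x.2 hq⟩ t s)
          / ((m + 1).factorial : ℂ))
    (hus : ∀ (x : {x : ℝ // 0 < x}) (t s : ℝ),
      (ε : ℂ) * deriv (fun s' => u x t s') s
        = (a (n + 1) 1 x t s * v ⟨q * x.1, mul_pos hq x.2⟩ t s
            - v x t s * a (n + 1) 1 ⟨x.1 / q, div_pos x.2 hq⟩ t s)
          / ((n + 1).factorial : ℂ))
    (hvs : ∀ (x : {x : ℝ // 0 < x}) (t s : ℝ),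
      (ε : ℂ) * deriv (fun s' => v x t s') s
        = v x t s * (a (n + 1) 0 x t s - a (n + 1) 0 ⟨x.1 / q, div_pos x.2 hq⟩ t s)
          / ((n + 1).factorial : ℂ)) :
    ∀ (x : {x : ℝ // 0 < x}) (t s : ℝ),
      deriv (fun s' => a (m + 1) 0 x t s' / ((m + 1).factorial : ℂ)) s
        = deriv (fun t' => a (n + 1) 0 x t' s / ((n + 1).factorial : ℂ)) t := by
  intro x t s
  have hε' : (ε : ℂ) ≠ 0 := Complex.ofReal_ne_zero.mpr hε
  have habs : ∀ k : ℤ, (1 < k ∨ k < -1) → 1 < |k| := by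
    intro k hk
    rcases hk with h | h
    · rwa [abs_of_pos (by omega)]
    · rw [abs_of_neg (by omega)]; omega
  have Ht : (ε : ℂ) * deriv (fun t' => a (n + 1) 0 x t' s) t
      = QToda.Psi q hq (fun r k x => a r k x t s) m (n + 1) 0 x
        / ((m + 1).factorial : ℂ) :=
    (QToda.flow q hq ε m (fun x t' => u x t' s) (fun x t' => v x t' s)
      (fun r k x t' => a r k x t' s)
      (fun x t' => (hu x t' s).1) (fun x t' => (hv x t' s).1)
      (fun x t' => ha11 x t' s) (fun x t' => ha10 x t' s) (fun x t' => ha1m1 x t' s)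
      (fun k hk x t' => ha1k k (habs k hk) x t' s)
      (fun r hr k x t' => by
        rw [QToda.S_one, QToda.S_neg_one]; exact harec r hr k x t' s)
      (fun x t' => by
        rw [QToda.S_one, QToda.S_neg_one]; exact hut x t' s)
      (fun x t' => by
        rw [QToda.S_neg_one]; exact hvt x t' s)
      (n + 1) (by omega) 0 x t).2
  have Hs : (ε : ℂ) * deriv (fun s' => a (m + 1) 0 x t s') s
      = QToda.Psi q hq (fun r k x => a r k x t s) n (m + 1) 0 x
        / ((n + 1).factorial : ℂ) :=
    (QToda.flow q hq ε n (fun x s' => u x t s') (fun x s' => v x t s')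
      (fun r k x s' => a r k x t s')
      (fun x s' => (hu x t s').2) (fun x s' => (hv x t s').2)
      (fun x s' => ha11 x t s') (fun x s' => ha10 x t s') (fun x s' => ha1m1 x t s')
      (fun k hk x s' => ha1k k (habs k hk) x t s')
      (fun r hr k x s' => by
        rw [QToda.S_one, QToda.S_neg_one]; exact harec r hr k x t s')
      (fun x s' => by
        rw [QToda.S_one, QToda.S_neg_one]; exact hus x t s')
      (fun x s' => by
        rw [QToda.S_neg_one]; exact hvs x t s')
      (m + 1) (by omega) 0 x s).2
  have hsym : QToda.Psi q hq (fun r k x => a r k x t s) n (m + 1) 0 x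
      = QToda.Psi q hq (fun r k x => a r k x t s) m (n + 1) 0 x :=
    QToda.PsiSym q hq (fun x => u x t s) (fun x => v x t s) (fun r k x => a r k x t s)
      (fun x => ha11 x t s) (fun x => ha10 x t s) (fun x => ha1m1 x t s)
      (fun k hk x => ha1k k (habs k hk) x t s)
      (fun r hr k x => by
        rw [QToda.S_one, QToda.S_neg_one]; exact harec r hr k x t s)
      m n x
  rw [deriv_div_const, deriv_div_const]
  refine mul_left_cancel₀ hε' ?_
  rw [← mul_div_assoc, ← mul_div_assoc, Ht, Hs, hsym]
  ring
end

section
/- Let q > 0, let b_m : (0,∞) → ℂ for m ∈ ℕ, let f, g : (0,∞) → ℂ, and suppose that for every y > 0 the family (b_m(y)·f(q^m y))_{m∈ℕ} is summable with sum B(f)(y). Consider the formal difference operator B f (Λ_q^{-1}/(1−Λ_q^{-1})) g = Σ_{m≥0} Σ_{k≥1} b_m(x) f(q^m x) g(q^{m−k}x) Λ_q^{m−k}, whose coefficient at Λ_q^r is c_r(x) = Σ_{m ≥ max(0, r+1)} b_m(x) f(q^m x) g(q^r x). Then: (i) for every integer r ≤ −1 and every x > 0, the family defining c_r(x) is summable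 and c_r(x) = B(f)(x)·g(q^r x); that is, the negative part satisfies (B f (Λ_q^{-1}/(1−Λ_q^{-1})) g)_− = B(f)·(Λ_q^{-1}/(1−Λ_q^{-1}))·g. (ii) Assume moreover that for every y > 0 the family (b_m(q^{-m}y)·g(q^{-m}y))_{m∈ℕ} is summable with sum B*(g)(y). Then for every integer j ≥ 1 and x > 0, the Λ_q^{-j}-coefficient of f (Λ_q^{-1}/(1−Λ_q^{-1})) g B, namely Σ_{m≥0} f(x)·g(q^{−m−j}x)·b_m(q^{−m−j}x), is summable with sum f(x)·B*(g)(q^{-j}x); that is, (f (Λ_q^{-1}/(1−Λ_q^{-1})) g B)_− = f·(Λ_q^{-1}/(1−Λ_q^{-1}))·B*(g). -/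
/-- the negative-part identities
(B f (Λ_q^{-1}/(1−Λ_q^{-1})) g)_− = B(f)·(Λ_q^{-1}/(1−Λ_q^{-1}))·g and
(f (Λ_q^{-1}/(1−Λ_q^{-1})) g B)_− = f·(Λ_q^{-1}/(1−Λ_q^{-1}))·B*(g)
for a non-negative difference operator B = Σ_{m≥0} b_mΛ_q^m, stated coefficientwise. -/
theorem q_toda_negative_part_lemma (q : ℝ) (hq : 0 < q)
    (b : ℕ → {x : ℝ // 0 < x} → ℂ)
    (f g : {x : ℝ // 0 < x} → ℂ)
    (Bf : {x : ℝ // 0 < x} → ℂ)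
    (hBf : ∀ y : {x : ℝ // 0 < x},
      HasSum (fun m : ℕ => b m y * f ⟨q ^ m * y.1, mul_pos (pow_pos hq m) y.2⟩) (Bf y)) :
    (∀ (r : ℤ), r ≤ -1 → ∀ x : {x : ℝ // 0 < x},
      HasSum (fun m : ℕ =>
          b m x * f ⟨q ^ m * x.1, mul_pos (pow_pos hq m) x.2⟩
            * g ⟨q ^ r * x.1, mul_pos (zpow_pos hq r) x.2⟩)
        (Bf x * g ⟨q ^ r * x.1, mul_pos (zpow_pos hq r) x.2⟩))
    ∧ (∀ (Bsg : {x : ℝ // 0 < x} → ℂ),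
        (∀ y : {x : ℝ // 0 < x},
          HasSum (fun m : ℕ =>
              b m ⟨y.1 / q ^ m, div_pos y.2 (pow_pos hq m)⟩
                * g ⟨y.1 / q ^ m, div_pos y.2 (pow_pos hq m)⟩) (Bsg y)) →
        ∀ (j : ℕ), 1 ≤ j → ∀ x : {x : ℝ // 0 < x},
          HasSum (fun m : ℕ =>
              f x * g ⟨x.1 / q ^ (m + j), div_pos x.2 (pow_pos hq (m + j))⟩
                * b m ⟨x.1 / q ^ (m + j), div_pos x.2 (pow_pos hq (m + j))⟩)
            (f x * Bsg ⟨x.1 / q ^ j, div_pos x.2 (pow_pos hq j)⟩)) := by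
  constructor
  · intro r hr x
    exact (hBf x).mul_right _
  · intro Bsg hBsg j hj x
    have key := (hBsg ⟨x.1 / q ^ j, div_pos x.2 (pow_pos hq j)⟩).mul_left (f x)
    have heq : ∀ m : ℕ,
        (⟨(⟨x.1 / q ^ j, div_pos x.2 (pow_pos hq j)⟩ : {x : ℝ // 0 < x}).1 / q ^ m,
          div_pos (⟨x.1 / q ^ j, div_pos x.2 (pow_pos hq j)⟩ : {x : ℝ // 0 < x}).2
            (pow_pos hq m)⟩ : {x : ℝ // 0 < x}) =
        ⟨x.1 / q ^ (m + j), div_pos x.2 (pow_pos hq (m + j))⟩ := by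
      intro m
      apply Subtype.ext
      simp [div_div, pow_add, mul_comm]
    convert key using 1
    · rfl
    funext m
    rw [heq m]
    ring
end

section
/- Let q > 0 with q ≠ 1, let n ≥ 1, let u, v, u', v' : (0,∞) → ℂ, and let t_1, …, t_n : (0,∞) → ℂ; set t_0 ≡ 1. Define linear operators on the space F of all functions g : (0,∞) → ℂ by (L g)(x) = g(qx) + u(x)g(x) + v(x)g(x/q), (L' g)(x) = g(qx) + u'(x)g(x) + v'(x)g(x/q), and the n-fold Darboux transformation operator (W_n g)(x) = Σ_{i=0}^{n} t_i(x)·g(q^{-i}x). If the intertwining relation L'∘W_n = W_n∘L holds as an identity of linear operators on F, then for all x > 0: (i) u'(x) = u(x) + t_1(x) − t_1(qx), and (ii) v'(x)·t_n(x/q) = t_n(x)·v(q^{-n}x); in particular, wherever t_n is nonvanishing, v'(x) = t_n(x)·v(q^{-n}x)·t_n(x/q)^{-1}. -/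
/-- the n-fold Darboux transformation W_n = Σ_{i=0}^n t_iΛ_q^{-i} (t₀ ≡ 1)
intertwining L' W_n = W_n L between Lax operators L = Λ_q + u + vΛ_q^{-1} and
L' = Λ_q + u' + v'Λ_q^{-1} forces u' = u + t₁ − Λ_q t₁ and
v'(x)·t_n(x/q) = t_n(x)·v(q^{-n}x). -/
theorem q_toda_darboux (q : ℝ) (hq : 0 < q) (hq1 : q ≠ 1) (n : ℕ) (hn : 1 ≤ n)
    (u v u' v' : {x : ℝ // 0 < x} → ℂ)
    (t : ℕ → {x : ℝ // 0 < x} → ℂ)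
    (ht0 : ∀ x : {x : ℝ // 0 < x}, t 0 x = 1)
    (L L' W : ({x : ℝ // 0 < x} → ℂ) → ({x : ℝ // 0 < x} → ℂ))
    (hL : ∀ (g : {x : ℝ // 0 < x} → ℂ) (x : {x : ℝ // 0 < x}),
      L g x = g ⟨q * x.1, mul_pos hq x.2⟩ + u x * g x
        + v x * g ⟨x.1 / q, div_pos x.2 hq⟩)
    (hL' : ∀ (g : {x : ℝ // 0 < x} → ℂ) (x : {x : ℝ // 0 < x}),
      L' g x = g ⟨q * x.1, mul_pos hq x.2⟩ + u' x * g x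
        + v' x * g ⟨x.1 / q, div_pos x.2 hq⟩)
    (hW : ∀ (g : {x : ℝ // 0 < x} → ℂ) (x : {x : ℝ // 0 < x}),
      W g x = ∑ i ∈ Finset.range (n + 1),
        t i x * g ⟨x.1 / q ^ i, div_pos x.2 (pow_pos hq i)⟩)
    (hint : ∀ (g : {x : ℝ // 0 < x} → ℂ) (x : {x : ℝ // 0 < x}),
      L' (W g) x = W (L g) x) :
    ∀ x : {x : ℝ // 0 < x},
      (u' x = u x + t 1 x - t 1 ⟨q * x.1, mul_pos hq x.2⟩)
      ∧ (v' x * t n ⟨x.1 / q, div_pos x.2 hq⟩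
          = t n x * v ⟨x.1 / q ^ n, div_pos x.2 (pow_pos hq n)⟩)
      ∧ (t n ⟨x.1 / q, div_pos x.2 hq⟩ ≠ 0 →
          v' x = t n x * v ⟨x.1 / q ^ n, div_pos x.2 (pow_pos hq n)⟩
            * (t n ⟨x.1 / q, div_pos x.2 hq⟩)⁻¹) := by
  intro x
  have hq0 : q ≠ 0 := ne_of_gt hq
  have hX : x.1 ≠ 0 := ne_of_gt x.2
  have hpinj : ∀ i j : ℕ, q ^ i = q ^ j → i = j := by
    intro i j h
    have h' : q ^ (i : ℤ) = q ^ (j : ℤ) := by rw [zpow_natCast, zpow_natCast]; exact h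
    exact_mod_cast zpow_right_injective₀ hq hq1 h'
  have master : ∀ a b c d : ℕ,
      (x.1 * q ^ a / q ^ b = x.1 * q ^ c / q ^ d) ↔ a + d = c + b := by
    intro a b c d
    rw [div_eq_div_iff (pow_ne_zero b hq0) (pow_ne_zero d hq0)]
    constructor
    · intro h
      have h2 : x.1 * q ^ (a + d) = x.1 * q ^ (c + b) := by
        rw [pow_add, pow_add, ← mul_assoc, ← mul_assoc]; exact h
      exact hpinj _ _ (mul_left_cancel₀ hX h2)
    · intro h
      rw [mul_assoc, mul_assoc, ← pow_add, ← pow_add, h]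
  -- Part 1 : the coefficient of g at x
  have part1 : u' x = u x + t 1 x - t 1 ⟨q * x.1, mul_pos hq x.2⟩ := by
    have c1 : ∀ i : ℕ, (q * x.1 / q ^ i = x.1) ↔ i = 1 := by
      intro i
      have m := master 1 i 0 0
      simp only [pow_one, pow_zero, mul_one, div_one] at m
      rw [mul_comm x.1 q] at m
      exact m.trans (by omega)
    have c2 : ∀ i : ℕ, (x.1 / q ^ i = x.1) ↔ i = 0 := by
      intro i
      have m := master 0 i 0 0
      simp only [pow_zero, mul_one, div_one] at m
      exact m.trans (by omega)
    have c3 : ∀ i : ℕ, (x.1 / q / q ^ i = x.1) ↔ False := by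
      intro i
      have m := master 0 (i+1) 0 0
      simp only [pow_zero, mul_one, div_one] at m
      rw [div_div, mul_comm q (q ^ i), ← pow_succ]
      exact m.trans (by simp)
    have c4 : ∀ i : ℕ, (q * (x.1 / q ^ i) = x.1) ↔ i = 1 := by
      intro i; rw [← mul_div_assoc]; exact c1 i
    have c5 : ∀ i : ℕ, (x.1 / q ^ i / q = x.1) ↔ False := by
      intro i
      have m := master 0 (i+1) 0 0
      simp only [pow_zero, mul_one, div_one] at m
      rw [div_div, ← pow_succ]
      exact m.trans (by simp)
    have h1 := hint (fun y => if y.1 = x.1 then (1:ℂ) else 0) x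
    simp only [hL', hL, hW] at h1
    simp only [c1, c2, c3, c4, c5, if_false, mul_ite, mul_one, mul_zero, ite_mul, zero_mul,
      mul_add, Finset.sum_add_distrib, Finset.sum_ite_eq', Finset.mem_range] at h1
    have hlt1 : 1 < n + 1 := by omega
    simp only [hlt1, Nat.succ_pos, if_true, Finset.sum_const_zero, add_zero, ht0, mul_one,
      one_mul, pow_zero, div_one, Subtype.coe_eta] at h1
    linear_combination h1
  -- Part 2 : the coefficient of g at x / q^(n+1)
  have part2 : v' x * t n ⟨x.1 / q, div_pos x.2 hq⟩
      = t n x * v ⟨x.1 / q ^ n, div_pos x.2 (pow_pos hq n)⟩ := by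
    have d1 : ∀ i : ℕ, (q * x.1 / q ^ i = x.1 / q ^ (n+1)) ↔ i = n + 2 := by
      intro i
      have m := master 1 i 0 (n+1)
      simp only [pow_one, pow_zero, mul_one] at m
      rw [mul_comm x.1 q] at m
      exact m.trans (by omega)
    have d2 : ∀ i : ℕ, (x.1 / q ^ i = x.1 / q ^ (n+1)) ↔ i = n + 1 := by
      intro i
      have m := master 0 i 0 (n+1)
      simp only [pow_zero, mul_one] at m
      exact m.trans (by omega)
    have d3 : ∀ i : ℕ, (x.1 / q / q ^ i = x.1 / q ^ (n+1)) ↔ i = n := by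
      intro i
      have m := master 0 (i+1) 0 (n+1)
      simp only [pow_zero, mul_one] at m
      rw [div_div, mul_comm q (q ^ i), ← pow_succ]
      exact m.trans (by omega)
    have d4 : ∀ i : ℕ, (q * (x.1 / q ^ i) = x.1 / q ^ (n+1)) ↔ i = n + 2 := by
      intro i; rw [← mul_div_assoc]; exact d1 i
    have d5 : ∀ i : ℕ, (x.1 / q ^ i / q = x.1 / q ^ (n+1)) ↔ i = n := by
      intro i
      have m := master 0 (i+1) 0 (n+1)
      simp only [pow_zero, mul_one] at m
      rw [div_div, ← pow_succ]
      exact m.trans (by omega)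
    have h2 := hint (fun y => if y.1 = x.1 / q ^ (n+1) then (1:ℂ) else 0) x
    simp only [hL', hL, hW] at h2
    simp only [d1, d2, d3, d4, d5, mul_ite, mul_one, mul_zero, ite_mul, zero_mul,
      mul_add, Finset.sum_add_distrib, Finset.sum_ite_eq', Finset.mem_range] at h2
    have hf1 : ¬ (n + 2 < n + 1) := by omega
    have hf2 : ¬ (n + 1 < n + 1) := by omega
    have hf3 : n < n + 1 := by omega
    simp only [hf1, hf2, hf3, if_true, if_false, zero_add, add_zero] at h2
    exact h2
  refine ⟨part1, part2, fun hne => ?_⟩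
  rw [eq_mul_inv_iff_mul_eq₀ hne]
  exact part2
end

section
/- Let N ≥ 1, let q > 0, let ε be a nonzero real number, let 1 ≤ k ≤ N, and let E_{kk} be the N×N matrix unit with 1 in position (k,k) and 0 elsewhere. Let Φ : (0,∞) × ℝ → GL_N(ℂ) (invertible complex N×N matrices) and β : (0,∞) × ℝ → M_N(ℂ) be such that for every x > 0 the maps t ↦ Φ(x,t) and t ↦ β(x,t) are differentiable. Suppose that for all x > 0 and t ∈ ℝ: (i) β(x,t)·E_{kk} − E_{kk}·β(qx,t) = ε·(∂_tΦ(x,t))·Φ(x,t)^{-1}, and (ii) ε·∂_tβ(x,t) = −Φ(x,t)·E_{kk}·Φ(x/q,t)^{-1}. Then for every x > 0 the map t ↦ (∂_tΦ(x,t))·Φ(x,t)^{-1} is differentiable and the multicomponent q-Toda equation holds: ε²·∂_t[(∂_tΦ(x,t))·Φ(x,t)^{-1}] = E_{kk}·Φ(qx,t)·E_{kk}·Φ(x,t)^{-1} − Φ(x,t)·E_{kk}·Φ(x/q,t)^{-1}·E_{kk}. -/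
attribute [local instance] Matrix.normedAddCommGroup Matrix.normedSpace

/-- the multicomponent q-Toda equation. If
β(x,t)E_{kk} − E_{kk}β(qx,t) = ε(∂_tΦ)Φ^{-1} and ε∂_tβ = −Φ(x,t)E_{kk}Φ(x/q,t)^{-1},
with Φ invertible-matrix valued, then
ε²∂_t[(∂_tΦ)Φ^{-1}] = E_{kk}Φ(qx,t)E_{kk}Φ(x,t)^{-1} − Φ(x,t)E_{kk}Φ(x/q,t)^{-1}E_{kk}. -/
theorem multicomponent_q_toda (N : ℕ) (hN : 1 ≤ N) (q : ℝ) (hq : 0 < q)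
    (ε : ℝ) (hε : ε ≠ 0) (k : Fin N)
    (Φ β : {x : ℝ // 0 < x} → ℝ → Matrix (Fin N) (Fin N) ℂ)
    (hΦinv : ∀ (x : {x : ℝ // 0 < x}) (t : ℝ), IsUnit (Φ x t))
    (hΦd : ∀ (x : {x : ℝ // 0 < x}) (t : ℝ), DifferentiableAt ℝ (Φ x) t)
    (hβd : ∀ (x : {x : ℝ // 0 < x}) (t : ℝ), DifferentiableAt ℝ (β x) t)
    (h1 : ∀ (x : {x : ℝ // 0 < x}) (t : ℝ),
      β x t * Matrix.single k k (1 : ℂ)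
          - Matrix.single k k (1 : ℂ) * β ⟨q * x.1, mul_pos hq x.2⟩ t
        = (ε : ℂ) • (deriv (Φ x) t * (Φ x t)⁻¹))
    (h2 : ∀ (x : {x : ℝ // 0 < x}) (t : ℝ),
      (ε : ℂ) • deriv (β x) t
        = - (Φ x t * Matrix.single k k (1 : ℂ)
            * (Φ ⟨x.1 / q, div_pos x.2 hq⟩ t)⁻¹)) :
    ∀ (x : {x : ℝ // 0 < x}) (t : ℝ),
      DifferentiableAt ℝ (fun s => deriv (Φ x) s * (Φ x s)⁻¹) t ∧
      ((ε : ℂ) ^ 2) • deriv (fun s => deriv (Φ x) s * (Φ x s)⁻¹) t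
        = Matrix.single k k (1 : ℂ) * Φ ⟨q * x.1, mul_pos hq x.2⟩ t
            * Matrix.single k k (1 : ℂ) * (Φ x t)⁻¹
          - Φ x t * Matrix.single k k (1 : ℂ)
            * (Φ ⟨x.1 / q, div_pos x.2 hq⟩ t)⁻¹
            * Matrix.single k k (1 : ℂ) := by
  intro x t
  set E : Matrix (Fin N) (Fin N) ℂ := Matrix.single k k (1 : ℂ) with hE
  set x' : {x : ℝ // 0 < x} := ⟨q * x.1, mul_pos hq x.2⟩ with hx'
  have hεC : (ε : ℂ) ≠ 0 := by exact_mod_cast hε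
  have hxx : (⟨x'.1 / q, div_pos x'.2 hq⟩ : {x : ℝ // 0 < x}) = x := by
    ext
    simp [hx', mul_div_cancel_left₀ _ (ne_of_gt hq)]
  -- the function equals ε⁻¹ • (β x s * E - E * β x' s)
  have hfun : (fun s => deriv (Φ x) s * (Φ x s)⁻¹)
      = fun s => (ε : ℂ)⁻¹ • (β x s * E - E * β x' s) := by
    funext s
    rw [h1 x s, smul_smul, inv_mul_cancel₀ hεC, one_smul]
  let L : Matrix (Fin N) (Fin N) ℂ →L[ℝ] Matrix (Fin N) (Fin N) ℂ :=
    (LinearMap.mulRight ℝ E).toContinuousLinearMap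
  let R : Matrix (Fin N) (Fin N) ℂ →L[ℝ] Matrix (Fin N) (Fin N) ℂ :=
    (LinearMap.mulLeft ℝ E).toContinuousLinearMap
  have hL : HasDerivAt (fun s => β x s * E) (deriv (β x) t * E) t := by
    have := L.hasFDerivAt.comp_hasDerivAt t (hβd x t).hasDerivAt
    simp only [L, LinearMap.mulRight_apply, LinearMap.coe_toContinuousLinearMap', LinearMap.coe_toContinuousLinearMap, Function.comp_def] at this; exact this
  have hR : HasDerivAt (fun s => E * β x' s) (E * deriv (β x') t) t := by
    have := R.hasFDerivAt.comp_hasDerivAt t (hβd x' t).hasDerivAt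
    simp only [R, LinearMap.mulLeft_apply, LinearMap.coe_toContinuousLinearMap', LinearMap.coe_toContinuousLinearMap, Function.comp_def] at this; exact this
  have hD : HasDerivAt (fun s => (ε : ℂ)⁻¹ • (β x s * E - E * β x' s))
      ((ε : ℂ)⁻¹ • (deriv (β x) t * E - E * deriv (β x') t)) t :=
    (hL.sub hR).const_smul ((ε : ℂ)⁻¹)
  rw [hfun]
  refine ⟨hD.differentiableAt, ?_⟩
  erw [hD.deriv]
  rw [smul_smul]
  have hsq : (ε : ℂ) ^ 2 * (ε : ℂ)⁻¹ = (ε : ℂ) := by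
    field_simp
  rw [hsq, smul_sub, ← smul_mul_assoc, ← mul_smul_comm, h2 x t, h2 x' t, hxx]
  simp only [neg_mul, mul_neg, sub_neg_eq_add, mul_assoc]
  abel
end
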